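/- For every x > 0 the Langevin function L(x) = coth x − x⁻¹ satisfies L″(x) < 0. Consequently, for the Langevin magnetisation law with any parameter λ > 0 one has m₁″(1) = λ² L″(λ)/L(λ) < 0, and hence the coefficient ď₁ = (12 − α₀ m₁″(1))/6 is strictly positive for every α₀ > 0. -/

import Mathlib

/-!
Differentiating `coth x − x⁻¹` twice gives `L″(x) = 2 cosh x / sinh³ x − 2 / x³`, so `L″ < 0` on
`(0, ∞)` is the Lazarević inequality `x³ cosh x < sinh³ x`. Since `4 sinh³ x = sinh 3x − 3 sinh x`,
both sides are odd power series with nonnegative coefficients, and the coefficient of `x^(2n+3)`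
on the right, `(3^(2n+3) − 3) / (2n+3)!`, dominates the one on the left, `4 / (2n)!`, with equality
only for `n = 0, 1`. The same comparison of series gives `sinh x < x cosh x`, i.e. `L > 0`.
Rescaling commutes with differentiation, so `m₁″(1) = λ² L″(λ) / L(λ) < 0`.
-/

open Filter Topology Set

noncomputable section

/-- The Langevin function `L(x) = coth x − x⁻¹`. -/
def langevinL (x : ℝ) : ℝ := Real.cosh x / Real.sinh x - x⁻¹

/-- The Langevin magnetisation law with parameter `λ > 0`:
`m₁(s) = L(λs)/L(λ)`. -/
def langevinLaw (lam s : ℝ) : ℝ := langevinL (lam * s) / langevinL lam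

open Real
open scoped Nat

theorem Nat.four_mul_add_three_le_three_pow (n : ℕ) :
    4 * ((2 * n + 3) * (2 * n + 2) * (2 * n + 1)) + 3 ≤ 3 ^ (2 * n + 3) := by
  induction n with
  | zero => norm_num
  | succ n ih =>
    rw [show 3 ^ (2 * (n + 1) + 3) = 9 * 3 ^ (2 * n + 3) by ring]
    nlinarith [Nat.zero_le (n ^ 3), Nat.zero_le (n ^ 2)]

theorem four_div_factorial_le (n : ℕ) :
    (4 : ℝ) / (2 * n)! ≤ (3 ^ (2 * n + 3) - 3) / (2 * n + 3)! := by
  have h : (4 : ℝ) * ((2 * n + 3) * (2 * n + 2) * (2 * n + 1)) + 3 ≤ 3 ^ (2 * n + 3) := by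
    exact_mod_cast Nat.four_mul_add_three_le_three_pow n
  rw [show 2 * n + 3 = 2 * n + 2 + 1 by ring, Nat.factorial_succ, Nat.factorial_succ,
    Nat.factorial_succ, div_le_div_iff₀ (by positivity) (by positivity)]
  push_cast
  nlinarith [(Nat.factorial_pos (2 * n)).le]

namespace Real

theorem hasSum_mul_cosh (x : ℝ) :
    HasSum (fun n : ℕ => x ^ (2 * n + 1) / (2 * n)!) (x * cosh x) := by
  simpa only [← mul_div_assoc, ← pow_succ'] using (hasSum_cosh x).mul_left x

theorem sinh_lt_mul_cosh {x : ℝ} (hx : 0 < x) : sinh x < x * cosh x := by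
  refine hasSum_lt (i := 1) (fun n => ?_) ?_ (hasSum_sinh x) (hasSum_mul_cosh x)
  · exact div_le_div_of_nonneg_left (by positivity) (by positivity)
      (Nat.cast_le.mpr (Nat.factorial_le (by omega)))
  · norm_num [Nat.factorial]
    linarith [pow_pos hx 3]

theorem hasSum_four_mul_sinh_pow_three (x : ℝ) :
    HasSum (fun n : ℕ => (3 ^ (2 * n + 3) - 3) / (2 * n + 3)! * x ^ (2 * n + 3))
      (4 * sinh x ^ 3) := by
  have h := (hasSum_sinh (3 * x)).sub ((hasSum_sinh x).mul_left 3)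
  rw [sinh_three_mul, add_sub_cancel_right, ← hasSum_nat_add_iff' 1] at h
  norm_num at h
  refine (congrArg (HasSum · _) (funext fun n => ?_)).mp h
  rw [mul_pow]
  ring_nf

theorem hasSum_four_mul_pow_three_mul_cosh (x : ℝ) :
    HasSum (fun n : ℕ => 4 / (2 * n)! * x ^ (2 * n + 3)) (4 * (x ^ 3 * cosh x)) := by
  rw [← mul_assoc]
  refine (congrArg (HasSum · _) (funext fun n => ?_)).mp ((hasSum_cosh x).mul_left (4 * x ^ 3))
  ring

theorem pow_three_mul_cosh_lt_sinh_pow_three {x : ℝ} (hx : 0 < x) :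
    x ^ 3 * cosh x < sinh x ^ 3 := by
  have h := hasSum_lt (i := 2)
    (fun n => mul_le_mul_of_nonneg_right (four_div_factorial_le n) (by positivity))
    (by norm_num [Nat.factorial]; linarith [pow_pos hx 7])
    (hasSum_four_mul_pow_three_mul_cosh x) (hasSum_four_mul_sinh_pow_three x)
  linarith

end Real

-- Unlike `iteratedDeriv_comp_const_mul`, no smoothness is needed: `deriv_comp_mul_left` holds for
-- every `f`.
theorem iteratedDeriv_comp_mul_left {𝕜 F : Type*} [NontriviallyNormedField 𝕜]
    [NormedAddCommGroup F] [NormedSpace 𝕜 F] (n : ℕ) (f : 𝕜 → F) (c : 𝕜) :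
    iteratedDeriv n (f <| c * ·) = fun x => c ^ n • iteratedDeriv n f (c * x) := by
  induction n with
  | zero => simp
  | succ n ih =>
    funext x
    rw [iteratedDeriv_succ, ih, deriv_fun_const_smul_field, iteratedDeriv_succ,
      deriv_comp_mul_left, smul_smul, pow_succ]

theorem hasDerivAt_langevinL {x : ℝ} (hx : x ≠ 0) :
    HasDerivAt langevinL ((x ^ 2)⁻¹ - (sinh x ^ 2)⁻¹) x := by
  have hs : sinh x ≠ 0 := sinh_ne_zero.2 hx
  refine (((hasDerivAt_cosh x).div (hasDerivAt_sinh x) hs).sub (hasDerivAt_inv hx)).congr_deriv ?_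
  field_simp
  linear_combination (-x ^ 2) * cosh_sq_sub_sinh_sq x

theorem deriv_deriv_langevinL {x : ℝ} (hx : x ≠ 0) :
    deriv (deriv langevinL) x = 2 * cosh x / sinh x ^ 3 - 2 / x ^ 3 := by
  have hs : sinh x ≠ 0 := sinh_ne_zero.2 hx
  have hderiv : deriv langevinL =ᶠ[𝓝 x] fun y => (y ^ 2)⁻¹ - (sinh y ^ 2)⁻¹ := by
    filter_upwards [eventually_ne_nhds hx] with y hy
    exact (hasDerivAt_langevinL hy).deriv
  rw [hderiv.deriv_eq]
  refine (((hasDerivAt_pow 2 x).inv (pow_ne_zero 2 hx)).sub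
    (((hasDerivAt_sinh x).pow 2).inv (pow_ne_zero 2 hs))).deriv.trans ?_
  field_simp
  simp only [Pi.pow_apply]
  ring

theorem deriv_deriv_langevinL_neg {x : ℝ} (hx : 0 < x) : deriv (deriv langevinL) x < 0 := by
  have hs : 0 < sinh x := sinh_pos_iff.2 hx
  rw [deriv_deriv_langevinL hx.ne', sub_neg, div_lt_div_iff₀ (by positivity) (by positivity)]
  nlinarith [pow_three_mul_cosh_lt_sinh_pow_three hx]

theorem langevinL_pos {x : ℝ} (hx : 0 < x) : 0 < langevinL x := by
  have hs : 0 < sinh x := sinh_pos_iff.2 hx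
  rw [langevinL, sub_pos, inv_eq_one_div, div_lt_div_iff₀ hx hs]
  linarith [sinh_lt_mul_cosh hx]

theorem iteratedDeriv_two_langevinLaw (lam s : ℝ) :
    iteratedDeriv 2 (langevinLaw lam) s
      = lam ^ 2 * deriv (deriv langevinL) (lam * s) / langevinL lam := by
  unfold langevinLaw
  rw [iteratedDeriv_div_const, iteratedDeriv_comp_mul_left]
  simp only [iteratedDeriv_succ, iteratedDeriv_zero, smul_eq_mul]

/-- The Langevin function is strictly concave on `(0, ∞)`: `L″(x) < 0` for all
`x > 0`. Consequently, for the Langevin magnetisation law with any parameter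
`λ > 0` one has `m₁″(1) = λ² L″(λ)/L(λ) < 0`, and hence the coefficient
`ď₁ = (12 − α₀ m₁″(1))/6` is strictly positive for every `α₀ > 0`. -/
theorem langevin_second_derivative_negative :
    (∀ x : ℝ, 0 < x → deriv (deriv langevinL) x < 0) ∧
    ∀ lam : ℝ, 0 < lam →
      iteratedDeriv 2 (langevinLaw lam) 1
          = lam ^ 2 * deriv (deriv langevinL) lam / langevinL lam ∧
      iteratedDeriv 2 (langevinLaw lam) 1 < 0 ∧
      ∀ α₀ : ℝ, 0 < α₀ →
        0 < (12 - α₀ * iteratedDeriv 2 (langevinLaw lam) 1) / 6 := by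
  refine ⟨fun x hx => deriv_deriv_langevinL_neg hx, fun lam hlam => ?_⟩
  have hformula : iteratedDeriv 2 (langevinLaw lam) 1
      = lam ^ 2 * deriv (deriv langevinL) lam / langevinL lam := by
    rw [iteratedDeriv_two_langevinLaw, mul_one]
  have hneg : iteratedDeriv 2 (langevinLaw lam) 1 < 0 := by
    rw [hformula]
    exact div_neg_of_neg_of_pos
      (mul_neg_of_pos_of_neg (by positivity) (deriv_deriv_langevinL_neg hlam)) (langevinL_pos hlam)
  refine ⟨hformula, hneg, fun α₀ hα₀ => ?_⟩
  have := mul_neg_of_pos_of_neg hα₀ hneg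
  linarith
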